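/- For every step k and node l, the distance between the current global parameter vector and the stale copy at node l satisfies ‖Θ^(k) − Θ̂^(k,l)‖₂ ≤ Σ_{i=max(1,k−τ)}^{k−1} ‖Δ^(i)‖₂, where Δ^(i) := Θ^(i+1) − Θ^(i). -/

import Mathlib

/-!
Split `Θ^(k) − Θ̂^(k,l)` into its blocks. Block `m` of it equals block `m` of `Θ^(k) − Θ^(r_m)`,
which telescopes into the block-`m` parts of the steps `Δ^(i)`, `r_m ≤ i < k`. Summing over the
blocks and exchanging the sums, each step contributes only through its own block `m_i`, and
that part has norm at most `‖Δ^(i)‖`.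
-/

open Finset

noncomputable section

/-- Projection of a parameter vector onto the coordinates of block `n`. -/
def blkProj {P N : ℕ} (blk : Fin P → Fin (N + 1)) (n : Fin (N + 1))
    (x : EuclideanSpace ℝ (Fin P)) : EuclideanSpace ℝ (Fin P) :=
  WithLp.toLp 2 (fun i => if blk i = n then x i else 0)

section BlockProjection

variable {P N : ℕ} (blk : Fin P → Fin (N + 1))

def blkProjLinear (n : Fin (N + 1)) :
    EuclideanSpace ℝ (Fin P) →ₗ[ℝ] EuclideanSpace ℝ (Fin P) where
  toFun := blkProj blk n
  map_add' x y := by ext i; simp only [blkProj, PiLp.add_apply]; split_ifs <;> simp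
  map_smul' c x := by ext i; simp only [blkProj, PiLp.smul_apply]; split_ifs <;> simp

@[simp]
lemma blkProjLinear_apply (n : Fin (N + 1)) (x : EuclideanSpace ℝ (Fin P)) :
    blkProjLinear blk n x = blkProj blk n x := rfl

lemma blkProj_sub (n : Fin (N + 1)) (x y : EuclideanSpace ℝ (Fin P)) :
    blkProj blk n (x - y) = blkProj blk n x - blkProj blk n y :=
  map_sub (blkProjLinear blk n) x y

lemma sum_blkProj (x : EuclideanSpace ℝ (Fin P)) : ∑ m, blkProj blk m x = x := by
  ext i
  simp [blkProj, WithLp.ofLp_sum, Finset.sum_apply]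

lemma norm_blkProj_le (n : Fin (N + 1)) (x : EuclideanSpace ℝ (Fin P)) :
    ‖blkProj blk n x‖ ≤ ‖x‖ := by
  rw [EuclideanSpace.norm_eq, EuclideanSpace.norm_eq]
  gcongr with i
  simp only [blkProj, PiLp.toLp_apply]
  split_ifs <;> simp

lemma norm_le_sum_norm_blkProj (x : EuclideanSpace ℝ (Fin P)) :
    ‖x‖ ≤ ∑ m, ‖blkProj blk m x‖ := by
  conv_lhs => rw [← sum_blkProj blk x]
  exact norm_sum_le _ _

lemma blkProj_eq_zero_of_eq_zero_off (n : Fin (N + 1)) {x : EuclideanSpace ℝ (Fin P)}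
    (hx : ∀ i, blk i ≠ n → x i = 0) {m : Fin (N + 1)} (hm : m ≠ n) : blkProj blk m x = 0 := by
  ext i
  simp only [blkProj, PiLp.toLp_apply, PiLp.zero_apply]
  split_ifs with hi
  · exact hx i (hi ▸ hm)
  · rfl

lemma sum_norm_blkProj_le_of_eq_zero_off (n : Fin (N + 1)) {x : EuclideanSpace ℝ (Fin P)}
    (hx : ∀ i, blk i ≠ n → x i = 0) : ∑ m, ‖blkProj blk m x‖ ≤ ‖x‖ := by
  rw [Finset.sum_eq_single_of_mem n (mem_univ n)
    (fun m _ hm => by rw [blkProj_eq_zero_of_eq_zero_off blk n hx hm, norm_zero])]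
  exact norm_blkProj_le blk n x

lemma norm_blkProj_sub_le_sum (n : Fin (N + 1)) (Θ : ℕ → EuclideanSpace ℝ (Fin P)) {r k : ℕ}
    (hrk : r ≤ k) :
    ‖blkProj blk n (Θ k - Θ r)‖ ≤ ∑ i ∈ Ico r k, ‖blkProj blk n (Θ (i + 1) - Θ i)‖ := by
  rw [← Finset.sum_Ico_sub Θ hrk, ← blkProjLinear_apply, map_sum]
  exact norm_sum_le _ _

end BlockProjection

/-- Lemma 2 (noisy setting, Lemma `lemma-diff-delta`): the distance between the
current parameter vector Θ^(k) and the stale copy Θ̂^(k,l) at node l is bounded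
by the sum of the step sizes ‖Δ^(i)‖ over the staleness window. -/
theorem stale_copy_distance_bound
    {P N : ℕ} (blk : Fin P → Fin (N + 1)) (τ : ℕ)
    (Θ : ℕ → EuclideanSpace ℝ (Fin P))
    (ms : ℕ → Fin (N + 1))
    -- each step updates exactly one block: Δ^(s) is supported on block m_s
    (hsupp : ∀ s : ℕ, ∀ i : Fin P, blk i ≠ ms s → Θ (s + 1) i = Θ s i)
    (hatΘ : ℕ → Fin (N + 1) → EuclideanSpace ℝ (Fin P))
    -- stale copies: block m of Θ̂^(k,l) equals block m of Θ^(r_m), max(1,k-τ) ≤ r_m ≤ k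
    (hstale : ∀ k, 1 ≤ k → ∀ l m : Fin (N + 1), ∃ r : ℕ,
      max 1 (k - τ) ≤ r ∧ r ≤ k ∧
      blkProj blk m (hatΘ k l) = blkProj blk m (Θ r))
    (k : ℕ) (hk : 1 ≤ k) (l : Fin (N + 1)) :
    ‖Θ k - hatΘ k l‖ ≤
      ∑ i ∈ Finset.Icc (max 1 (k - τ)) (k - 1), ‖Θ (i + 1) - Θ i‖ := by
  set window := Icc (max 1 (k - τ)) (k - 1)
  have hblock (m : Fin (N + 1)) : ‖blkProj blk m (Θ k - hatΘ k l)‖ ≤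
      ∑ i ∈ window, ‖blkProj blk m (Θ (i + 1) - Θ i)‖ := by
    obtain ⟨r, hr, hrk, hstale_m⟩ := hstale k hk l m
    rw [blkProj_sub, hstale_m, ← blkProj_sub]
    refine (norm_blkProj_sub_le_sum blk m Θ hrk).trans
      (sum_le_sum_of_subset_of_nonneg (fun i hi => ?_) fun _ _ _ => norm_nonneg _)
    simp only [mem_Ico, mem_Icc, window] at hi ⊢
    omega
  calc ‖Θ k - hatΘ k l‖
      ≤ ∑ m, ‖blkProj blk m (Θ k - hatΘ k l)‖ := norm_le_sum_norm_blkProj blk _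
    _ ≤ ∑ m, ∑ i ∈ window, ‖blkProj blk m (Θ (i + 1) - Θ i)‖ := sum_le_sum fun m _ => hblock m
    _ = ∑ i ∈ window, ∑ m, ‖blkProj blk m (Θ (i + 1) - Θ i)‖ := sum_comm
    _ ≤ ∑ i ∈ window, ‖Θ (i + 1) - Θ i‖ := sum_le_sum fun i _ =>
        sum_norm_blkProj_le_of_eq_zero_off blk (ms i) fun j hj => by simp [hsupp i j hj]
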